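/- arXiv:1206.3707 — 6 statements merged into one kernel-verified Lean document; each statement's English description precedes it below -/
import Mathlib

section
/- Let G be a group and c : G → ℝ satisfy c(1)=0, conjugation invariance, and subadditivity. Define q(φ)=c(φ)+c(φ⁻¹) and σ(φ)=lim_{k→∞} c(φᵏ)/k. Then for all φ,ψ ∈ G: |σ(φψ) − σ(φ) − σ(ψ)| ≤ min(q(φ), q(ψ)). -/
theorem stmt_2 {G : Type*} [Group G] (c : G → ℝ)
    (h1 : c 1 = 0)
    (hconj : ∀ φ ψ : G, c (φ * ψ * φ⁻¹) = c ψ)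
    (hsub : ∀ φ ψ : G, c (φ * ψ) ≤ c φ + c ψ)
    (q : G → ℝ) (hq : ∀ φ, q φ = c φ + c φ⁻¹)
    (σ : G → ℝ)
    (hσ : ∀ φ : G, Filter.Tendsto (fun k : ℕ => c (φ ^ k) / (k : ℝ))
      Filter.atTop (nhds (σ φ)))
    (φ ψ : G) :
    |σ (φ * ψ) - σ φ - σ ψ| ≤ min (q φ) (q ψ) := by
  -- cyclic invariance of c
  have hcyc : ∀ u v : G, c (u * v) = c (v * u) := by
    intro u v
    have h := hconj u (v * u)
    rw [show u * (v * u) * u⁻¹ = u * v by group] at h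
    exact h
  -- key identity bound, form 1 : c ((a*b)^k * x) ≤ c (a^k * x) + k * c b
  have key1 : ∀ (a b : G) (k : ℕ), ∀ x : G,
      c ((a * b) ^ k * x) ≤ c (a ^ k * x) + (k : ℝ) * c b := by
    intro a b k
    induction k with
    | zero => intro x; simp
    | succ k ih =>
      intro x
      have e1 : (a * b) ^ (k + 1) * x = (a * b) ^ k * (a * (b * x)) := by
        rw [pow_succ, mul_assoc, mul_assoc]
      have e2 : a ^ k * (a * (b * x)) = a ^ (k + 1) * (b * x) := by
        rw [pow_succ, mul_assoc]
      calc c ((a * b) ^ (k + 1) * x)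
          = c ((a * b) ^ k * (a * (b * x))) := by rw [e1]
        _ ≤ c (a ^ k * (a * (b * x))) + (k : ℝ) * c b := ih _
        _ = c (b * (x * a ^ (k + 1))) + (k : ℝ) * c b := by
            rw [e2, hcyc (a ^ (k + 1)) (b * x), mul_assoc]
        _ ≤ (c b + c (x * a ^ (k + 1))) + (k : ℝ) * c b := by
            have := hsub b (x * a ^ (k + 1)); linarith
        _ = c (a ^ (k + 1) * x) + ((k : ℕ) + 1 : ℝ) * c b := by
            rw [hcyc x (a ^ (k + 1))]; ring
        _ = c (a ^ (k + 1) * x) + ((k + 1 : ℕ) : ℝ) * c b := by push_cast; ring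
  -- key identity bound, form 2 : c (x * (a*b)^k) ≤ c (x * b^k) + k * c a
  have key2 : ∀ (a b : G) (k : ℕ), ∀ x : G,
      c (x * (a * b) ^ k) ≤ c (x * b ^ k) + (k : ℝ) * c a := by
    intro a b k
    induction k with
    | zero => intro x; simp
    | succ k ih =>
      intro x
      have e1 : x * (a * b) ^ (k + 1) = (x * a * b) * (a * b) ^ k := by
        rw [pow_succ']; simp [mul_assoc]
      have e2 : x * a * b * b ^ k = (x * a) * b ^ (k + 1) := by
        rw [pow_succ']; simp [mul_assoc]
      calc c (x * (a * b) ^ (k + 1))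
          = c ((x * a * b) * (a * b) ^ k) := by rw [e1]
        _ ≤ c (x * a * b * b ^ k) + (k : ℝ) * c a := ih _
        _ = c (a * (b ^ (k + 1) * x)) + (k : ℝ) * c a := by
            rw [e2, hcyc (x * a) (b ^ (k + 1)), ← mul_assoc, hcyc (b ^ (k+1) * x) a]
        _ ≤ (c a + c (b ^ (k + 1) * x)) + (k : ℝ) * c a := by
            have := hsub a (b ^ (k + 1) * x); linarith
        _ = c (x * b ^ (k + 1)) + ((k : ℕ) + 1 : ℝ) * c a := by
            rw [hcyc (b ^ (k + 1)) x]; ring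
        _ = c (x * b ^ (k + 1)) + ((k + 1 : ℕ) : ℝ) * c a := by push_cast; ring
  have k1 : ∀ (a b : G) (k : ℕ), c ((a * b) ^ k) ≤ c (a ^ k) + (k : ℝ) * c b := by
    intro a b k; have := key1 a b k 1; simpa using this
  have k2 : ∀ (a b : G) (k : ℕ), c ((a * b) ^ k) ≤ (k : ℝ) * c a + c (b ^ k) := by
    intro a b k
    have := key2 a b k 1
    simpa [add_comm] using this
  -- c (g^k) ≤ k * c g
  have hpow : ∀ (g : G) (k : ℕ), c (g ^ k) ≤ (k : ℝ) * c g := by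
    intro g k
    have := k2 g 1 k
    simpa [h1] using this
  -- σ g ≤ c g
  have hσle : ∀ g : G, σ g ≤ c g := by
    intro g
    refine le_of_tendsto (hσ g) ?_
    filter_upwards [Filter.eventually_ge_atTop 1] with k hk
    have hk0 : (0 : ℝ) < (k : ℝ) := by exact_mod_cast hk
    rw [div_le_iff₀ hk0]
    calc c (g ^ k) ≤ (k : ℝ) * c g := hpow g k
      _ = c g * (k : ℝ) := by ring
  -- -c g⁻¹ ≤ σ g
  have hσge : ∀ g : G, -c g⁻¹ ≤ σ g := by
    intro g
    refine ge_of_tendsto (hσ g) ?_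
    filter_upwards [Filter.eventually_ge_atTop 1] with k hk
    have hk0 : (0 : ℝ) < (k : ℝ) := by exact_mod_cast hk
    rw [le_div_iff₀ hk0]
    have h0 : (0 : ℝ) ≤ c (g ^ k) + c ((g⁻¹) ^ k) := by
      have := hsub (g ^ k) ((g⁻¹) ^ k)
      have he : g ^ k * (g⁻¹) ^ k = 1 := by
        rw [inv_pow, mul_inv_cancel]
      rw [he, h1] at this
      linarith
    have h2 : c ((g⁻¹) ^ k) ≤ (k : ℝ) * c g⁻¹ := hpow g⁻¹ k
    nlinarith
  -- σ (a*b) ≤ σ a + c b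
  have main1 : ∀ a b : G, σ (a * b) ≤ σ a + c b := by
    intro a b
    refine le_of_tendsto_of_tendsto (hσ (a * b))
      ((hσ a).add tendsto_const_nhds) ?_
    filter_upwards [Filter.eventually_ge_atTop 1] with k hk
    have hk0 : (0 : ℝ) < (k : ℝ) := by exact_mod_cast hk
    show c ((a * b) ^ k) / (k : ℝ) ≤ c (a ^ k) / (k : ℝ) + c b
    rw [div_add' _ _ _ (ne_of_gt hk0), div_le_div_iff₀ hk0 hk0]
    have := k1 a b k
    nlinarith
  -- σ (a*b) ≤ c a + σ b
  have main2 : ∀ a b : G, σ (a * b) ≤ c a + σ b := by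
    intro a b
    refine le_of_tendsto_of_tendsto (hσ (a * b))
      (tendsto_const_nhds.add (hσ b)) ?_
    filter_upwards [Filter.eventually_ge_atTop 1] with k hk
    have hk0 : (0 : ℝ) < (k : ℝ) := by exact_mod_cast hk
    show c ((a * b) ^ k) / (k : ℝ) ≤ c a + c (b ^ k) / (k : ℝ)
    rw [add_div' _ _ _ (ne_of_gt hk0), div_le_div_iff₀ hk0 hk0]
    have := k2 a b k
    nlinarith
  have U1 : σ (φ * ψ) ≤ σ φ + c ψ := main1 φ ψ
  have U2 : σ (φ * ψ) ≤ c φ + σ ψ := main2 φ ψ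
  have L1 : σ φ ≤ σ (φ * ψ) + c ψ⁻¹ := by
    have := main1 (φ * ψ) ψ⁻¹
    simpa using this
  have L2 : σ ψ ≤ c φ⁻¹ + σ (φ * ψ) := by
    have := main2 φ⁻¹ (φ * ψ)
    simpa using this
  have B1 : σ φ ≤ c φ := hσle φ
  have B2 : σ ψ ≤ c ψ := hσle ψ
  have B3 : -c φ⁻¹ ≤ σ φ := hσge φ
  have B4 : -c ψ⁻¹ ≤ σ ψ := hσge ψ
  rw [le_min_iff, abs_le, abs_le, hq φ, hq ψ]
  refine ⟨⟨?_, ?_⟩, ⟨?_, ?_⟩⟩ <;> linarith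
end

section
/- Let A be a POVM on a finite set Ω_N = {1,...,N} with values in Hermitian operators on a finite-dimensional Hilbert space H, obtained as a smearing of a POVM B on a measurable space Θ via a measurable partition of unity {γ_j} on Θ (i.e., A_j = ∫_Θ γ_j dB). Then for every x ∈ [-1,1]^N, the noise operators satisfy Δ_B(Γx) ≤ Δ_A(x) in the operator (Loewner) order, where Γx = Σ_j x_j γ_j, Δ_A(x) = Σ_j x_j² A_j − (Σ_j x_j A_j)², and Δ_B(f) = ∫_Θ f² dB − (∫_Θ f dB)². -/
/-! Since `T` is linear and `A j = T (γ j)`, the difference `Δ_A(x) - Δ_B(Γx)` equals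
`T (∑ j, x j ^ 2 • γ j - (Γx) ^ 2)`: the squares `(∑ j, x j • A j) ^ 2` cancel. Pointwise,
`∑ j, x j ^ 2 * γ j w - (∑ j, x j * γ j w) ^ 2` is the variance of `x` under the probability
weights `γ · w`, hence nonnegative by Cauchy–Schwarz, and `T` is positive. -/

theorem sq_sum_mul_le_sum_sq_mul {ι R : Type*} [CommSemiring R] [LinearOrder R]
    [IsStrictOrderedRing R] [ExistsAddOfLE R] (s : Finset ι) (x p : ι → R)
    (hp : ∀ i ∈ s, 0 ≤ p i) (hp_sum : ∑ i ∈ s, p i = 1) :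
    (∑ i ∈ s, x i * p i) ^ 2 ≤ ∑ i ∈ s, x i ^ 2 * p i := by
  calc (∑ i ∈ s, x i * p i) ^ 2
      ≤ (∑ i ∈ s, x i ^ 2 * p i) * ∑ i ∈ s, p i :=
        Finset.sum_sq_le_sum_mul_sum_of_sq_le_mul s
          (fun i hi => mul_nonneg (sq_nonneg _) (hp i hi)) hp fun i _ => le_of_eq (by ring)
    _ = ∑ i ∈ s, x i ^ 2 * p i := by rw [hp_sum, mul_one]

theorem map_sum_mul_of_additive {Θ M ι : Type*} [AddCommGroup M] [Module ℂ M]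
    (T : (Θ → ℝ) → M) (hTadd : ∀ f g, T (f + g) = T f + T g)
    (hTsmul : ∀ (a : ℝ) f, T (a • f) = (a : ℂ) • T f)
    (s : Finset ι) (c : ι → ℝ) (f : ι → Θ → ℝ) :
    T (fun w => ∑ j ∈ s, c j * f j w) = ∑ j ∈ s, (c j : ℂ) • T (f j) := by
  let L : (Θ → ℝ) →ₗ[ℝ] M :=
    { toFun := T
      map_add' := hTadd
      map_smul' := fun a f => by simpa only [RingHom.id_apply, Complex.coe_smul] using hTsmul a f }
  have hfun : (fun w => ∑ j ∈ s, c j * f j w) = ∑ j ∈ s, c j • f j := by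
    ext w; simp [Finset.sum_apply]
  calc T (fun w => ∑ j ∈ s, c j * f j w) = L (∑ j ∈ s, c j • f j) := by rw [hfun]; rfl
    _ = ∑ j ∈ s, (c j : ℂ) • T (f j) := by
      simp only [map_sum, map_smul, Complex.coe_smul]; rfl

theorem stmt_3_general {E : Type*} [NormedAddCommGroup E] [InnerProductSpace ℂ E]
    {Θ : Type*} [MeasurableSpace Θ]
    (T : (Θ → ℝ) → (E →L[ℂ] E))
    (hTadd : ∀ f g : Θ → ℝ, T (f + g) = T f + T g)
    (hTsmul : ∀ (a : ℝ) (f : Θ → ℝ), T (a • f) = (a : ℂ) • T f)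
    (hTpos : ∀ f : Θ → ℝ, Measurable f → (∀ w, 0 ≤ f w) → (T f).IsPositive)
    {N : ℕ} (γ : Fin N → Θ → ℝ)
    (hγmeas : ∀ j, Measurable (γ j))
    (hγ01 : ∀ j w, 0 ≤ γ j w ∧ γ j w ≤ 1)
    (hγsum : ∀ w, ∑ j, γ j w = 1)
    (A : Fin N → (E →L[ℂ] E))
    (hA : ∀ j, A j = T (γ j))
    (x : Fin N → ℝ) :
    -- Δ_A(x) - Δ_B(Γ x) is a positive operator
    ((∑ j, ((x j)^2 : ℂ) • A j - (∑ j, (x j : ℂ) • A j)^2)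
      - (T ((fun w => ∑ j, x j * γ j w)^2)
          - (T (fun w => ∑ j, x j * γ j w))^2)).IsPositive := by
  set Γx : Θ → ℝ := fun w => ∑ j, x j * γ j w
  set Γx2 : Θ → ℝ := fun w => ∑ j, x j ^ 2 * γ j w
  have hA2 : ∑ j, ((x j)^2 : ℂ) • A j = T Γx2 := by
    simp only [Γx2, map_sum_mul_of_additive T hTadd hTsmul, hA, Complex.ofReal_pow]
  have hA1 : ∑ j, (x j : ℂ) • A j = T Γx := by
    simp only [Γx, map_sum_mul_of_additive T hTadd hTsmul, hA]
  have hT_sub : T (Γx2 - Γx ^ 2) = T Γx2 - T (Γx ^ 2) :=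
    (AddMonoidHom.mk' T hTadd).map_sub _ _
  have hmeas : Measurable (Γx2 - Γx ^ 2) := by
    simp only [Γx, Γx2]; fun_prop
  have hnonneg : ∀ w, 0 ≤ (Γx2 - Γx ^ 2) w := fun w =>
    sub_nonneg.2 <| sq_sum_mul_le_sum_sq_mul _ x (γ · w) (fun j _ => (hγ01 j w).1) (hγsum w)
  convert hTpos _ hmeas hnonneg using 1
  rw [hA2, hA1, hT_sub]
  abel

/-- An abstract POVM `B` on a measurable space `Θ` is encoded by its integration map
`T : (Θ → ℝ) → (E →L[ℂ] E)`, `T f = ∫_Θ f dB`, which is additive, real-homogeneous,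
positive on (measurable) nonnegative functions, and unital. A POVM `A` on the finite
set `Fin N` is a smearing of `B` via a measurable partition of unity `γ` when
`A j = T (γ j)`.  For `x ∈ [-1,1]^N` and `Γx = ∑ j, x j • γ j`, the noise operators
satisfy `Δ_B(Γx) ≤ Δ_A(x)` in the Loewner order. -/
theorem stmt_3 {E : Type*} [NormedAddCommGroup E] [InnerProductSpace ℂ E]
    [FiniteDimensional ℂ E]
    {Θ : Type*} [MeasurableSpace Θ]
    (T : (Θ → ℝ) → (E →L[ℂ] E))
    (hTadd : ∀ f g : Θ → ℝ, T (f + g) = T f + T g)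
    (hTsmul : ∀ (a : ℝ) (f : Θ → ℝ), T (a • f) = (a : ℂ) • T f)
    (hTpos : ∀ f : Θ → ℝ, Measurable f → (∀ w, 0 ≤ f w) → (T f).IsPositive)
    (hTone : T (fun _ => 1) = 1)
    {N : ℕ} (γ : Fin N → Θ → ℝ)
    (hγmeas : ∀ j, Measurable (γ j))
    (hγ01 : ∀ j w, 0 ≤ γ j w ∧ γ j w ≤ 1)
    (hγsum : ∀ w, ∑ j, γ j w = 1)
    (A : Fin N → (E →L[ℂ] E))
    (hA : ∀ j, A j = T (γ j))
    (x : Fin N → ℝ) (hx : ∀ j, |x j| ≤ 1) :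
    -- Δ_A(x) - Δ_B(Γ x) is a positive operator
    ((∑ j, ((x j)^2 : ℂ) • A j - (∑ j, (x j : ℂ) • A j)^2)
      - (T ((fun w => ∑ j, x j * γ j w)^2)
          - (T (fun w => ∑ j, x j * γ j w))^2)).IsPositive :=
  stmt_3_general T hTadd hTsmul hTpos γ hγmeas hγ01 hγsum A hA x
end

section
/- (Janssens' lemma) Let B be a POVM on a finite set Θ with values in positive semidefinite operators on a finite-dimensional Hilbert space H, and let u, v : Θ → ℝ. Write B(u) = Σ_θ u(θ) B_θ and Δ_B(u) = Σ_θ u(θ)² B_θ − B(u)². Then ‖Δ_B(u)‖^{1/2} · ‖Δ_B(v)‖^{1/2} ≥ (1/2)·‖[B(u), B(v)]‖, where ‖·‖ is the operator norm and [X,Y] = XY − YX. -/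
/-!
Write `B(u) = ∑ θ, u θ • B θ`, and for a vector `φ` let `d_u φ : Θ → E` be the family of
deviations `θ ↦ u θ • φ - B(u) φ`. Since `∑ θ, B θ = 1`,
`∑ θ, ⟪d_u φ θ, B θ (d_v ψ θ)⟫ = ⟪φ, (B(u v) - B(u) B(v)) ψ⟫`.
The left side is a positive semidefinite sesquilinear form in `(d_u φ, d_v ψ)`, so it obeys
Cauchy–Schwarz. Antisymmetrising in `u, v` yields `⟪φ, [B(u), B(v)] ψ⟫`, while on the diagonal
it is `⟪φ, Δ_B(u) φ⟫ ≤ ‖Δ_B(u)‖ ‖φ‖²`; hence `|⟪φ, [B(u), B(v)] ψ⟫| ≤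
2 ‖Δ_B(u)‖^{1/2} ‖Δ_B(v)‖^{1/2} ‖φ‖ ‖ψ‖`.
-/

open scoped InnerProductSpace
open Finset

namespace POVM

variable {E : Type*} [NormedAddCommGroup E] [InnerProductSpace ℂ E] {Θ : Type*} [Fintype Θ]

noncomputable section

abbrev weightedInnerCore (B : Θ → E →L[ℂ] E) (hB : ∀ θ, (B θ).IsPositive) :
    PreInnerProductSpace.Core ℂ (Θ → E) where
  inner f g := ∑ θ, ⟪f θ, B θ (g θ)⟫_ℂ
  conj_inner_symm f g := by
    simp only [map_sum, inner_conj_symm]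
    exact sum_congr rfl fun θ _ => (hB θ).inner_left_eq_inner_right _ _
  re_inner_nonneg f := by
    simp only [map_sum]
    exact sum_nonneg fun θ _ => (hB θ).re_inner_nonneg_right _
  add_left f g h := by simp only [Pi.add_apply, inner_add_left, sum_add_distrib]
  smul_left f g c := by simp only [Pi.smul_apply, inner_smul_left, mul_sum]

/-- The paper's `B(u)`. -/
def weightedSum (B : Θ → E →L[ℂ] E) (u : Θ → ℝ) : E →L[ℂ] E :=
  ∑ θ, (u θ : ℂ) • B θ

/-- The paper's noise operator `Δ_B(u)`. -/
def noise (B : Θ → E →L[ℂ] E) (u : Θ → ℝ) : E →L[ℂ] E :=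
  weightedSum B (u ^ 2) - weightedSum B u ^ 2

def deviation (B : Θ → E →L[ℂ] E) (u : Θ → ℝ) (φ : E) : Θ → E :=
  fun θ => (u θ : ℂ) • φ - weightedSum B u φ

end

variable {B : Θ → E →L[ℂ] E}

theorem norm_sum_inner_apply_le (hB : ∀ θ, (B θ).IsPositive) (f g : Θ → E) :
    ‖∑ θ, ⟪f θ, B θ (g θ)⟫_ℂ‖ ≤
      √(RCLike.re (∑ θ, ⟪f θ, B θ (f θ)⟫_ℂ)) * √(RCLike.re (∑ θ, ⟪g θ, B θ (g θ)⟫_ℂ)) := by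
  let := weightedInnerCore B hB
  have h := InnerProductSpace.Core.inner_mul_inner_self_le (𝕜 := ℂ) f g
  rw [InnerProductSpace.Core.norm_inner_symm g f] at h
  have hf : 0 ≤ RCLike.re (∑ θ, ⟪f θ, B θ (f θ)⟫_ℂ) :=
    (weightedInnerCore B hB).re_inner_nonneg f
  rw [← Real.sqrt_mul hf]
  exact Real.le_sqrt_of_sq_le (by rw [sq]; exact h)

theorem inner_weightedSum_apply (u : Θ → ℝ) (x y : E) :
    ⟪x, weightedSum B u y⟫_ℂ = ∑ θ, (u θ : ℂ) * ⟪x, B θ y⟫_ℂ := by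
  simp only [weightedSum, FunLike.coe_sum, Finset.sum_apply, FunLike.coe_smul, Pi.smul_apply,
    inner_sum, inner_smul_right]

theorem sum_inner_deviation (hB : ∑ θ, B θ = 1) (u v : Θ → ℝ) (φ ψ : E) :
    ∑ θ, ⟪deviation B u φ θ, B θ (deviation B v ψ θ)⟫_ℂ =
      ⟪φ, weightedSum B (u * v) ψ⟫_ℂ - ⟪φ, weightedSum B u (weightedSum B v ψ)⟫_ℂ := by
  have hsum (x : E) : ∑ θ, B θ x = x := by
    rw [← _root_.sum_apply, hB, one_apply_eq_self]
  simp only [deviation, map_sub, map_smul, inner_sub_left, inner_sub_right, inner_smul_left,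
    inner_smul_right, Complex.conj_ofReal, sum_sub_distrib, ← inner_sum, hsum,
    inner_weightedSum_apply]
  simp only [mul_sub, sum_sub_distrib, Pi.mul_apply, Complex.ofReal_mul]
  have hcomm : ∑ θ, (v θ : ℂ) * (u θ * ⟪φ, B θ ψ⟫_ℂ) = ∑ θ, (u θ : ℂ) * v θ * ⟪φ, B θ ψ⟫_ℂ :=
    sum_congr rfl fun θ _ => by ring
  rw [hcomm]
  ring

theorem inner_commutator_eq (hB : ∑ θ, B θ = 1) (u v : Θ → ℝ) (φ ψ : E) :
    ⟪φ, (weightedSum B u * weightedSum B v - weightedSum B v * weightedSum B u) ψ⟫_ℂ =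
      ∑ θ, ⟪deviation B v φ θ, B θ (deviation B u ψ θ)⟫_ℂ -
        ∑ θ, ⟪deviation B u φ θ, B θ (deviation B v ψ θ)⟫_ℂ := by
  rw [sum_inner_deviation hB, sum_inner_deviation hB, mul_comm v u, sub_apply, inner_sub_right,
    mul_apply_eq_comp, mul_apply_eq_comp]
  ring

theorem re_sum_inner_deviation_self_le (hB : ∑ θ, B θ = 1) (u : Θ → ℝ) (φ : E) :
    RCLike.re (∑ θ, ⟪deviation B u φ θ, B θ (deviation B u φ θ)⟫_ℂ) ≤
      ‖noise B u‖ * ‖φ‖ ^ 2 := by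
  have hnoise : ∑ θ, ⟪deviation B u φ θ, B θ (deviation B u φ θ)⟫_ℂ = ⟪φ, noise B u φ⟫_ℂ := by
    rw [sum_inner_deviation hB, noise, sub_apply, inner_sub_right, sq, sq, mul_apply_eq_comp]
  rw [hnoise]
  calc RCLike.re ⟪φ, noise B u φ⟫_ℂ
      ≤ ‖φ‖ * ‖noise B u φ‖ := re_inner_le_norm _ _
    _ ≤ ‖φ‖ * (‖noise B u‖ * ‖φ‖) := by gcongr; exact (noise B u).le_opNorm φ
    _ = ‖noise B u‖ * ‖φ‖ ^ 2 := by ring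

theorem norm_inner_commutator_le (hBpos : ∀ θ, (B θ).IsPositive) (hB : ∑ θ, B θ = 1)
    (u v : Θ → ℝ) (φ ψ : E) :
    ‖⟪φ, (weightedSum B u * weightedSum B v - weightedSum B v * weightedSum B u) ψ⟫_ℂ‖ ≤
      2 * (√‖noise B u‖ * √‖noise B v‖) * (‖φ‖ * ‖ψ‖) := by
  have hdev (w : Θ → ℝ) (x : E) :
      √(RCLike.re (∑ θ, ⟪deviation B w x θ, B θ (deviation B w x θ)⟫_ℂ)) ≤
        √‖noise B w‖ * ‖x‖ := by
    rw [← Real.sqrt_sq (norm_nonneg x), ← Real.sqrt_mul (norm_nonneg _)]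
    exact Real.sqrt_le_sqrt (re_sum_inner_deviation_self_le hB w x)
  rw [inner_commutator_eq hB]
  calc _ ≤ ‖∑ θ, ⟪deviation B v φ θ, B θ (deviation B u ψ θ)⟫_ℂ‖ +
        ‖∑ θ, ⟪deviation B u φ θ, B θ (deviation B v ψ θ)⟫_ℂ‖ := norm_sub_le _ _
    _ ≤ (√‖noise B v‖ * ‖φ‖) * (√‖noise B u‖ * ‖ψ‖) +
        (√‖noise B u‖ * ‖φ‖) * (√‖noise B v‖ * ‖ψ‖) := by
      gcongr <;> refine (norm_sum_inner_apply_le hBpos _ _).trans ?_ <;> gcongr <;> apply hdev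
    _ = 2 * (√‖noise B u‖ * √‖noise B v‖) * (‖φ‖ * ‖ψ‖) := by ring

theorem norm_commutator_le (hBpos : ∀ θ, (B θ).IsPositive) (hB : ∑ θ, B θ = 1)
    (u v : Θ → ℝ) :
    ‖weightedSum B u * weightedSum B v - weightedSum B v * weightedSum B u‖ ≤
      2 * (√‖noise B u‖ * √‖noise B v‖) := by
  set C := weightedSum B u * weightedSum B v - weightedSum B v * weightedSum B u
  refine ContinuousLinearMap.opNorm_le_of_re_inner_le (by positivity) fun x y hx hy => ?_
  calc RCLike.re ⟪C x, y⟫_ℂ ≤ ‖⟪C x, y⟫_ℂ‖ := RCLike.re_le_norm _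
    _ = ‖⟪y, C x⟫_ℂ‖ := norm_inner_symm _ _
    _ ≤ 2 * (√‖noise B u‖ * √‖noise B v‖) * (‖y‖ * ‖x‖) :=
        norm_inner_commutator_le hBpos hB u v y x
    _ = 2 * (√‖noise B u‖ * √‖noise B v‖) := by rw [hx, hy, mul_one, mul_one]

end POVM

theorem stmt_5_general {E : Type*} [NormedAddCommGroup E] [InnerProductSpace ℂ E]
    {Θ : Type*} [Fintype Θ] (B : Θ → (E →L[ℂ] E))
    (hBpos : ∀ θ, (B θ).IsPositive)
    (hBsum : ∑ θ, B θ = 1)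
    (u v : Θ → ℝ) :
    (1 / 2 : ℝ) * ‖(∑ θ, (u θ : ℂ) • B θ) * (∑ θ, (v θ : ℂ) • B θ)
        - (∑ θ, (v θ : ℂ) • B θ) * (∑ θ, (u θ : ℂ) • B θ)‖
      ≤ Real.sqrt ‖∑ θ, ((u θ)^2 : ℂ) • B θ - (∑ θ, (u θ : ℂ) • B θ)^2‖
        * Real.sqrt ‖∑ θ, ((v θ)^2 : ℂ) • B θ - (∑ θ, (v θ : ℂ) • B θ)^2‖ := by
  have hnoise (w : Θ → ℝ) :
      ∑ θ, ((w θ)^2 : ℂ) • B θ - (∑ θ, (w θ : ℂ) • B θ)^2 = POVM.noise B w := by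
    simp only [POVM.noise, POVM.weightedSum, Pi.pow_apply, Complex.ofReal_pow]
  rw [hnoise, hnoise]
  have h := POVM.norm_commutator_le hBpos hBsum u v
  simp only [POVM.weightedSum] at h
  linarith

/-- Janssens' lemma: for a POVM `B` on a finite set and real functions `u, v`,
`‖Δ_B(u)‖^{1/2} ⬝ ‖Δ_B(v)‖^{1/2} ≥ (1/2)‖[B(u),B(v)]‖`. -/
theorem stmt_5 {E : Type*} [NormedAddCommGroup E] [InnerProductSpace ℂ E]
    [FiniteDimensional ℂ E]
    {Θ : Type*} [Fintype Θ] (B : Θ → (E →L[ℂ] E))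
    (hBpos : ∀ θ, (B θ).IsPositive)
    (hBsum : ∑ θ, B θ = 1)
    (u v : Θ → ℝ) :
    (1 / 2 : ℝ) * ‖(∑ θ, (u θ : ℂ) • B θ) * (∑ θ, (v θ : ℂ) • B θ)
        - (∑ θ, (v θ : ℂ) • B θ) * (∑ θ, (u θ : ℂ) • B θ)‖
      ≤ Real.sqrt ‖∑ θ, ((u θ)^2 : ℂ) • B θ - (∑ θ, (u θ : ℂ) • B θ)^2‖
        * Real.sqrt ‖∑ θ, ((v θ)^2 : ℂ) • B θ - (∑ θ, (v θ : ℂ) • B θ)^2‖ :=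
  stmt_5_general B hBpos hBsum u v
end

section
/- Let f = {f_1,...,f_L} and g = {g_1,...,g_N} be smooth partitions of unity on a symplectic manifold M. For arbitrary coefficients x_{ij}, y_{kl} ∈ [-1,1], the Poisson bracket satisfies pointwise |{Σ_{ij} x_{ij} f_i g_j, Σ_{kl} y_{kl} f_k g_l}| ≤ 4a, where a = max(ν_c(f), ν_c(g), ν_c(f,g)) and ν_c(f,g) = max over x ∈ [-1,1]^L, y ∈ [-1,1]^N of ‖{Σ x_i f_i, Σ y_j g_j}‖ (sup norm). Consequently ν_c(f·g) ≤ 4·max(ν_c(f), ν_c(g), ν_c(f,g)) for the product partition of unity {f_i g_j}. -/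
open scoped BigOperators

/-- Product of two partitions of unity: for the product partition `{f_i g_j}`,
`ν_c(f·g) ≤ 4 max(ν_c(f), ν_c(g), ν_c(f,g))`, stated pointwise.  The Poisson
bracket is abstracted as a bilinear antisymmetric operation `P` on functions
satisfying the Leibniz rule. -/
theorem stmt_9 {M : Type*}
    (P : (M → ℝ) → (M → ℝ) → (M → ℝ))
    (hPadd : ∀ F G H : M → ℝ, P (F + G) H = P F H + P G H)
    (hPsmul : ∀ (c : ℝ) (F G : M → ℝ), P (c • F) G = c • P F G)
    (hPanti : ∀ F G : M → ℝ, P F G = -P G F)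
    (hPLeib : ∀ F G H : M → ℝ, P (F * G) H = F * P G H + G * P F H)
    {L N : ℕ} (f : Fin L → M → ℝ) (g : Fin N → M → ℝ)
    (hf0 : ∀ i z, 0 ≤ f i z) (hg0 : ∀ j z, 0 ≤ g j z)
    (hfsum : ∀ z, ∑ i, f i z = 1) (hgsum : ∀ z, ∑ j, g j z = 1)
    (a : ℝ)
    (hff : ∀ x y : Fin L → ℝ, (∀ i, |x i| ≤ 1) → (∀ i, |y i| ≤ 1) →
      ∀ z, |P (fun w => ∑ i, x i * f i w) (fun w => ∑ i, y i * f i w) z| ≤ a)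
    (hgg : ∀ x y : Fin N → ℝ, (∀ j, |x j| ≤ 1) → (∀ j, |y j| ≤ 1) →
      ∀ z, |P (fun w => ∑ j, x j * g j w) (fun w => ∑ j, y j * g j w) z| ≤ a)
    (hfg : ∀ (x : Fin L → ℝ) (y : Fin N → ℝ), (∀ i, |x i| ≤ 1) → (∀ j, |y j| ≤ 1) →
      ∀ z, |P (fun w => ∑ i, x i * f i w) (fun w => ∑ j, y j * g j w) z| ≤ a)
    (x y : Fin L → Fin N → ℝ)
    (hx : ∀ i j, |x i j| ≤ 1) (hy : ∀ i j, |y i j| ≤ 1) :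
    ∀ z, |P (fun w => ∑ i, ∑ j, x i j * (f i w * g j w))
            (fun w => ∑ k, ∑ l, y k l * (f k w * g l w)) z| ≤ 4 * a := by
  intro z
  -- Derived linearity facts
  have hP0 : ∀ G : M → ℝ, P 0 G = 0 := fun G => by simpa using hPsmul 0 0 G
  have hsum1 : ∀ {ι : Type} (s : Finset ι) (F : ι → M → ℝ) (G : M → ℝ),
      P (∑ i ∈ s, F i) G = ∑ i ∈ s, P (F i) G := by
    intro ι s F G
    induction s using Finset.cons_induction with
    | empty => simpa using hP0 G
    | cons i s hi ih => rw [Finset.sum_cons, hPadd, ih, Finset.sum_cons]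
  have hsum2 : ∀ {ι : Type} (t : Finset ι) (F : M → ℝ) (G : ι → M → ℝ),
      P F (∑ j ∈ t, G j) = ∑ j ∈ t, P F (G j) := by
    intro ι t F G
    rw [hPanti, hsum1, ← Finset.sum_neg_distrib]
    exact Finset.sum_congr rfl fun j _ => (hPanti F (G j)).symm
  have hsmul2 : ∀ (c : ℝ) (F G : M → ℝ), P F (c • G) = c • P F G := by
    intro c F G
    rw [hPanti, hPsmul, hPanti G F]
    simp [smul_neg]
  -- Bilinear expansion (evaluated at `z`)
  have hexpand : ∀ {ι κ : Type} [Fintype ι] [Fintype κ] (c : ι → ℝ) (d : κ → ℝ)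
      (F : ι → M → ℝ) (G : κ → M → ℝ),
      P (fun w => ∑ i, c i * F i w) (fun w => ∑ j, d j * G j w) z
        = ∑ i, ∑ j, c i * d j * P (F i) (G j) z := by
    intro ι κ _ _ c d F G
    have h1 : (fun w => ∑ i, c i * F i w) = ∑ i, c i • F i := by
      funext w; simp [Finset.sum_apply]
    have h2 : (fun w => ∑ j, d j * G j w) = ∑ j, d j • G j := by
      funext w; simp [Finset.sum_apply]
    rw [h1, h2, hsum1, Finset.sum_apply]
    refine Finset.sum_congr rfl fun i _ => ?_
    rw [hPsmul, hsum2, Pi.smul_apply, Finset.sum_apply, smul_eq_mul, Finset.mul_sum]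
    refine Finset.sum_congr rfl fun j _ => ?_
    rw [hsmul2]
    simp [smul_eq_mul, mul_assoc]
  -- Leibniz in the second variable
  have hLeib2 : ∀ A B C : M → ℝ, P A (B * C) = B * P A C + C * P A B := by
    intro A B C
    rw [hPanti, hPLeib, hPanti B A, hPanti C A]
    ring
  -- The four-term splitting of the bracket of products
  have hfour : ∀ (i k : Fin L) (j l : Fin N),
      P (f i * g j) (f k * g l) z
        = f i z * f k z * P (g j) (g l) z + g j z * g l z * P (f i) (f k) z
          + f i z * g l z * P (g j) (f k) z + g j z * f k z * P (f i) (g l) z := by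
    intro i k j l
    rw [hPLeib, hLeib2, hLeib2]
    simp only [Pi.add_apply, Pi.mul_apply]
    ring
  -- Bounding lemma for weighted double sums
  have bnd : ∀ {α β : Type} [Fintype α] [Fintype β] (u : α → ℝ) (v : β → ℝ)
      (B : α → β → ℝ), (∀ i, 0 ≤ u i) → (∀ j, 0 ≤ v j) →
      (∑ i, u i = 1) → (∑ j, v j = 1) → (∀ i j, |B i j| ≤ a) →
      |∑ i, ∑ j, u i * v j * B i j| ≤ a := by
    intro α β _ _ u v B hu hv husum hvsum hB
    calc |∑ i, ∑ j, u i * v j * B i j| ≤ ∑ i, |∑ j, u i * v j * B i j| :=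
          Finset.abs_sum_le_sum_abs _ _
      _ ≤ ∑ i, ∑ j, |u i * v j * B i j| :=
          Finset.sum_le_sum fun i _ => Finset.abs_sum_le_sum_abs _ _
      _ ≤ ∑ i, ∑ j, u i * v j * a := by
          refine Finset.sum_le_sum fun i _ => Finset.sum_le_sum fun j _ => ?_
          rw [abs_mul, abs_of_nonneg (mul_nonneg (hu i) (hv j))]
          exact mul_le_mul_of_nonneg_left (hB i j) (mul_nonneg (hu i) (hv j))
      _ = ((∑ i, u i) * (∑ j, v j)) * a := by
          rw [Finset.sum_mul_sum, Finset.sum_mul]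
          exact Finset.sum_congr rfl fun i _ => by rw [Finset.sum_mul]
      _ = a := by rw [husum, hvsum, one_mul, one_mul]
  -- Rewrite the two arguments as sums over pairs
  have hFeq : (fun w => ∑ i, ∑ j, x i j * (f i w * g j w))
      = (fun w => ∑ p : Fin L × Fin N, x p.1 p.2 * (f p.1 * g p.2) w) := by
    funext w; rw [Fintype.sum_prod_type]; simp [Pi.mul_apply]
  have hGeq : (fun w => ∑ k, ∑ l, y k l * (f k w * g l w))
      = (fun w => ∑ q : Fin L × Fin N, y q.1 q.2 * (f q.1 * g q.2) w) := by
    funext w; rw [Fintype.sum_prod_type]; simp [Pi.mul_apply]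
  -- The four grouped terms
  set T1 : ℝ := ∑ i, ∑ k, f i z * f k z *
      P (fun w => ∑ j, x i j * g j w) (fun w => ∑ l, y k l * g l w) z with hT1
  set T2 : ℝ := ∑ j, ∑ l, g j z * g l z *
      P (fun w => ∑ i, x i j * f i w) (fun w => ∑ k, y k l * f k w) z with hT2
  set T3 : ℝ := ∑ i, ∑ l, f i z * g l z *
      P (fun w => ∑ j, x i j * g j w) (fun w => ∑ k, y k l * f k w) z with hT3
  set T4 : ℝ := ∑ j, ∑ k, g j z * f k z *
      P (fun w => ∑ i, x i j * f i w) (fun w => ∑ l, y k l * g l w) z with hT4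
  -- Main decomposition
  have hmain : P (fun w => ∑ i, ∑ j, x i j * (f i w * g j w))
      (fun w => ∑ k, ∑ l, y k l * (f k w * g l w)) z = T1 + T2 + T3 + T4 := by
    rw [hFeq, hGeq, hexpand (fun p : Fin L × Fin N => x p.1 p.2)
      (fun q : Fin L × Fin N => y q.1 q.2) (fun p => f p.1 * g p.2) (fun q => f q.1 * g q.2)]
    have expandT : ∀ {α β γ δ : Type} [Fintype α] [Fintype β] [Fintype γ] [Fintype δ]
        (c : α → β → ℝ) (d : γ → δ → ℝ) (u : α → ℝ) (v : γ → ℝ) (B : β → δ → ℝ),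
        (∑ p : α × β, ∑ q : γ × δ,
            c p.1 p.2 * d q.1 q.2 * (u p.1 * v q.1 * B p.2 q.2))
          = ∑ i, ∑ k, u i * v k * ∑ j, ∑ l, c i j * d k l * B j l := by
      intro α β γ δ _ _ _ _ c d u v B
      rw [Fintype.sum_prod_type]
      refine Finset.sum_congr rfl fun i _ => ?_
      rw [show (∑ j, ∑ q : γ × δ,
            c i j * d q.1 q.2 * (u i * v q.1 * B j q.2))
          = ∑ j, ∑ k, ∑ l, c i j * d k l * (u i * v k * B j l) from
        Finset.sum_congr rfl fun j _ => by rw [Fintype.sum_prod_type]]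
      rw [Finset.sum_comm]
      refine Finset.sum_congr rfl fun k _ => ?_
      rw [Finset.mul_sum]
      refine Finset.sum_congr rfl fun j _ => ?_
      rw [Finset.mul_sum]
      exact Finset.sum_congr rfl fun l _ => by ring
    calc (∑ p : Fin L × Fin N, ∑ q : Fin L × Fin N,
          x p.1 p.2 * y q.1 q.2 * P (f p.1 * g p.2) (f q.1 * g q.2) z)
        = (∑ p : Fin L × Fin N, ∑ q : Fin L × Fin N,
            x p.1 p.2 * y q.1 q.2 * (f p.1 z * f q.1 z * P (g p.2) (g q.2) z))
        + (∑ p : Fin L × Fin N, ∑ q : Fin L × Fin N,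
            x p.1 p.2 * y q.1 q.2 * (g p.2 z * g q.2 z * P (f p.1) (f q.1) z))
        + (∑ p : Fin L × Fin N, ∑ q : Fin L × Fin N,
            x p.1 p.2 * y q.1 q.2 * (f p.1 z * g q.2 z * P (g p.2) (f q.1) z))
        + (∑ p : Fin L × Fin N, ∑ q : Fin L × Fin N,
            x p.1 p.2 * y q.1 q.2 * (g p.2 z * f q.1 z * P (f p.1) (g q.2) z)) := by
          rw [← Finset.sum_add_distrib, ← Finset.sum_add_distrib, ← Finset.sum_add_distrib]
          refine Finset.sum_congr rfl fun p _ => ?_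
          rw [← Finset.sum_add_distrib, ← Finset.sum_add_distrib, ← Finset.sum_add_distrib]
          refine Finset.sum_congr rfl fun q _ => ?_
          rw [hfour p.1 q.1 p.2 q.2]
          ring
      _ = T1 + T2 + T3 + T4 := by
          rw [hT1, hT2, hT3, hT4]
          congr 1
          · congr 1
            · congr 1
              · -- T1
                rw [expandT x y (fun i => f i z) (fun k => f k z)
                  (fun j l => P (g j) (g l) z)]
                refine Finset.sum_congr rfl fun i _ => Finset.sum_congr rfl fun k _ => ?_
                rw [hexpand (fun j => x i j) (fun l => y k l) g g]
              · -- T2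
                rw [show (∑ p : Fin L × Fin N, ∑ q : Fin L × Fin N,
                      x p.1 p.2 * y q.1 q.2 * (g p.2 z * g q.2 z * P (f p.1) (f q.1) z))
                    = ∑ p : Fin N × Fin L, ∑ q : Fin N × Fin L,
                      x p.2 p.1 * y q.2 q.1 * (g p.1 z * g q.1 z * P (f p.2) (f q.2) z) from by
                  refine Fintype.sum_equiv (Equiv.prodComm (Fin L) (Fin N)) _ _ fun p => ?_
                  exact Fintype.sum_equiv (Equiv.prodComm (Fin L) (Fin N)) _ _ fun q => rfl]
                rw [expandT (fun j i => x i j) (fun l k => y k l) (fun j => g j z)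
                  (fun l => g l z) (fun i k => P (f i) (f k) z)]
                refine Finset.sum_congr rfl fun j _ => Finset.sum_congr rfl fun l _ => ?_
                rw [hexpand (fun i => x i j) (fun k => y k l) f f]
            · -- T3
              rw [show (∑ p : Fin L × Fin N, ∑ q : Fin L × Fin N,
                    x p.1 p.2 * y q.1 q.2 * (f p.1 z * g q.2 z * P (g p.2) (f q.1) z))
                  = ∑ p : Fin L × Fin N, ∑ q : Fin N × Fin L,
                    x p.1 p.2 * y q.2 q.1 * (f p.1 z * g q.1 z * P (g p.2) (f q.2) z) from by
                refine Finset.sum_congr rfl fun p _ => ?_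
                exact Fintype.sum_equiv (Equiv.prodComm (Fin L) (Fin N)) _ _ fun q => rfl]
              rw [expandT x (fun l k => y k l) (fun i => f i z) (fun l => g l z)
                (fun j k => P (g j) (f k) z)]
              refine Finset.sum_congr rfl fun i _ => Finset.sum_congr rfl fun l _ => ?_
              rw [hexpand (fun j => x i j) (fun k => y k l) g f]
          · -- T4
            rw [show (∑ p : Fin L × Fin N, ∑ q : Fin L × Fin N,
                  x p.1 p.2 * y q.1 q.2 * (g p.2 z * f q.1 z * P (f p.1) (g q.2) z))
                = ∑ p : Fin N × Fin L, ∑ q : Fin L × Fin N,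
                  x p.2 p.1 * y q.1 q.2 * (g p.1 z * f q.1 z * P (f p.2) (g q.2) z) from
              Fintype.sum_equiv (Equiv.prodComm (Fin L) (Fin N)) _ _ fun p => rfl]
            rw [expandT (fun j i => x i j) y (fun j => g j z) (fun k => f k z)
              (fun i l => P (f i) (g l) z)]
            refine Finset.sum_congr rfl fun j _ => Finset.sum_congr rfl fun k _ => ?_
            rw [hexpand (fun i => x i j) (fun l => y k l) f g]
  -- Bound each grouped term by `a`
  have hxy1 : ∀ (i : Fin L) (k : Fin L),
      |P (fun w => ∑ j, x i j * g j w) (fun w => ∑ l, y k l * g l w) z| ≤ a :=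
    fun i k => hgg (fun j => x i j) (fun l => y k l) (fun j => hx i j) (fun l => hy k l) z
  have hb1 : |T1| ≤ a := by
    rw [hT1]
    exact bnd (fun i => f i z) (fun k => f k z) _ (fun i => hf0 i z) (fun k => hf0 k z)
      (hfsum z) (hfsum z) hxy1
  have hb2 : |T2| ≤ a := by
    rw [hT2]
    exact bnd (fun j => g j z) (fun l => g l z) _ (fun j => hg0 j z) (fun l => hg0 l z)
      (hgsum z) (hgsum z)
      (fun j l => hff (fun i => x i j) (fun k => y k l) (fun i => hx i j) (fun k => hy k l) z)
  have hb3 : |T3| ≤ a := by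
    rw [hT3]
    refine bnd (fun i => f i z) (fun l => g l z) _ (fun i => hf0 i z) (fun l => hg0 l z)
      (hfsum z) (hgsum z) (fun i l => ?_)
    rw [hPanti]
    rw [show (-P (fun w => ∑ k, y k l * f k w) (fun w => ∑ j, x i j * g j w)) z
        = -(P (fun w => ∑ k, y k l * f k w) (fun w => ∑ j, x i j * g j w) z) from rfl,
      abs_neg]
    exact hfg (fun k => y k l) (fun j => x i j) (fun k => hy k l) (fun j => hx i j) z
  have hb4 : |T4| ≤ a := by
    rw [hT4]
    exact bnd (fun j => g j z) (fun k => f k z) _ (fun j => hg0 j z) (fun k => hf0 k z)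
      (hgsum z) (hfsum z)
      (fun j k => hfg (fun i => x i j) (fun l => y k l) (fun i => hx i j) (fun l => hy k l) z)
  -- Conclude
  rw [hmain]
  calc |T1 + T2 + T3 + T4| ≤ |T1| + |T2| + |T3| + |T4| := by
        calc |T1 + T2 + T3 + T4| ≤ |T1 + T2 + T3| + |T4| := abs_add_le _ _
          _ ≤ |T1 + T2| + |T3| + |T4| := by gcongr; exact abs_add_le _ _
          _ ≤ |T1| + |T2| + |T3| + |T4| := by gcongr; exact abs_add_le _ _
    _ ≤ a + a + a + a := by gcongr
    _ = 4 * a := by ring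
end

section
/- Let ζ : C^∞(M) → ℝ be a functional that is ℝ₊-homogeneous (ζ(sF) = sζ(F) for s > 0), normalized (ζ(1) = 1), vanishing on functions with displaceable support, and satisfying the Poisson bracket inequality |ζ(F+G) − ζ(F) − ζ(G)| ≤ √(2Q·‖{F,G}‖) whenever both F and G are supported in sets from a given class with constant Q. Then for any partition of unity f_1,...,f_N subordinated to a cover by N displaceable sets, the magnitude of Poisson non-commutativity satisfies ν_c(f) ≥ 1/(2N²Q); hence pb(W) ≥ 1/(2N²Q) for any open cover W = {W_1,...,W_N} by sets with sup_{φ ∈ G(W_j)} q(φ) ≤ Q. -/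
open scoped BigOperators

/-!
Write `g_k = f_1 + ⋯ + f_k`. Each `f_{k+1}` is supported in a displaceable set, so `ζ` kills it
and the Poisson bracket inequality gives `ζ(g_{k+1}) ≤ ζ(g_k) + √(2Qν)`, because `{g_k, f_{k+1}}`
is one of the brackets `{∑ xᵢ fᵢ, ∑ yᵢ fᵢ}` with 0/1 coefficients. Telescoping from `ζ(0) = 0`
to `ζ(g_N) = ζ(1) = 1` yields `1 ≤ N √(2Qν)`.
-/

section QuasiState

variable {M ι : Type*} {P : (M → ℝ) → (M → ℝ) → (M → ℝ)} {ζ : (M → ℝ) → ℝ}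
  {W : ι → Set M} {Q b : ℝ}

lemma quasiState_add_le_add_sqrt
    (hζvanish : ∀ F : M → ℝ, (∃ j, Function.support F ⊆ W j) → ζ F = 0)
    (hζpb : ∀ (F G : M → ℝ) (b : ℝ), 0 ≤ b →
      (∃ j, Function.support G ⊆ W j) → (∀ z, |P F G z| ≤ b) →
      |ζ (F + G) - ζ F - ζ G| ≤ Real.sqrt (2 * Q * b))
    (hb : 0 ≤ b) {F G : M → ℝ} (hG : ∃ j, Function.support G ⊆ W j)
    (hFG : ∀ z, |P F G z| ≤ b) :
    ζ (F + G) ≤ ζ F + Real.sqrt (2 * Q * b) := by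
  have h := (abs_le.mp (hζpb F G b hb hG hFG)).2
  rw [hζvanish G hG] at h
  linarith

lemma quasiState_sum_le_card_mul_sqrt [DecidableEq ι]
    (hζ0 : ζ 0 = 0)
    (hζvanish : ∀ F : M → ℝ, (∃ j, Function.support F ⊆ W j) → ζ F = 0)
    (hζpb : ∀ (F G : M → ℝ) (b : ℝ), 0 ≤ b →
      (∃ j, Function.support G ⊆ W j) → (∀ z, |P F G z| ≤ b) →
      |ζ (F + G) - ζ F - ζ G| ≤ Real.sqrt (2 * Q * b))
    (hb : 0 ≤ b) (f : ι → M → ℝ) (hfsupp : ∀ j, Function.support (f j) ⊆ W j)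
    (hbracket : ∀ (t : Finset ι) (i : ι) (z : M), |P (∑ j ∈ t, f j) (f i) z| ≤ b)
    (s : Finset ι) :
    ζ (∑ i ∈ s, f i) ≤ s.card * Real.sqrt (2 * Q * b) := by
  induction s using Finset.induction_on with
  | empty => simp [hζ0]
  | insert a s ha ih =>
    have hstep := quasiState_add_le_add_sqrt hζvanish hζpb hb ⟨a, hfsupp a⟩ (hbracket s a)
    rw [Finset.sum_insert ha, add_comm, Finset.card_insert_of_notMem ha]
    push_cast
    linarith

end QuasiState

lemma sum_ite_mem_mul_eq_sum {M ι : Type*} [Fintype ι] [DecidableEq ι]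
    (t : Finset ι) (f : ι → M → ℝ) :
    (fun w => ∑ i, (if i ∈ t then 1 else 0) * f i w) = ∑ i ∈ t, f i := by
  funext w
  simp [Finset.sum_apply, ite_mul]

lemma one_div_le_of_one_le_mul_sqrt {n Q ν : ℝ} (hn : 0 < n) (hQ : 0 < Q) (hν : 0 ≤ ν)
    (h : 1 ≤ n * Real.sqrt (2 * Q * ν)) :
    1 / (2 * n ^ 2 * Q) ≤ ν := by
  have hsq : (n * Real.sqrt (2 * Q * ν)) ^ 2 = n ^ 2 * (2 * Q * ν) := by
    rw [mul_pow, Real.sq_sqrt (by positivity)]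
  rw [div_le_iff₀ (by positivity)]
  nlinarith

theorem stmt_10_general {M : Type*}
    (P : (M → ℝ) → (M → ℝ) → (M → ℝ))
    (ζ : (M → ℝ) → ℝ)
    {N : ℕ} (hN : 0 < N) (W : Fin N → Set M)
    (Q : ℝ) (hQ : 0 < Q)
    (hζone : ζ (fun _ => 1) = 1)
    (hζvanish : ∀ F : M → ℝ, (∃ j, Function.support F ⊆ W j) → ζ F = 0)
    (hζpb : ∀ (F G : M → ℝ) (b : ℝ), 0 ≤ b →
      (∃ j, Function.support G ⊆ W j) → (∀ z, |P F G z| ≤ b) →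
      |ζ (F + G) - ζ F - ζ G| ≤ Real.sqrt (2 * Q * b))
    (f : Fin N → M → ℝ)
    (hfsum : ∀ z, ∑ j, f j z = 1)
    (hfsupp : ∀ j, Function.support (f j) ⊆ W j)
    (ν : ℝ) (hν0 : 0 ≤ ν)
    (hν : ∀ x y : Fin N → ℝ, (∀ i, |x i| ≤ 1) → (∀ i, |y i| ≤ 1) →
      ∀ z, |P (fun w => ∑ i, x i * f i w) (fun w => ∑ i, y i * f i w) z| ≤ ν) :
    1 / (2 * (N : ℝ)^2 * Q) ≤ ν := by
  have hζ0 : ζ 0 = 0 := hζvanish 0 ⟨⟨0, hN⟩, by simp⟩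
  have hbracket : ∀ (t : Finset (Fin N)) i z, |P (∑ j ∈ t, f j) (f i) z| ≤ ν := by
    intro t i z
    have hunit : ∀ (s : Finset (Fin N)) j, |(if j ∈ s then (1 : ℝ) else 0)| ≤ 1 := by
      intro s j; split_ifs <;> norm_num
    have h := hν _ _ (hunit t) (hunit {i}) z
    rwa [sum_ite_mem_mul_eq_sum, sum_ite_mem_mul_eq_sum, Finset.sum_singleton] at h
  have hsum_one : ∑ i, f i = fun _ => 1 := by
    funext z
    simp [Finset.sum_apply, hfsum]
  have h := quasiState_sum_le_card_mul_sqrt hζ0 hζvanish hζpb hν0 f hfsupp hbracket Finset.univ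
  rw [hsum_one, hζone, Finset.card_univ, Fintype.card_fin] at h
  exact one_div_le_of_one_le_mul_sqrt (by exact_mod_cast hN) hQ hν0 h

/-- Lower bound for the Poisson bracket invariant of a cover by `N` displaceable
sets.  `ζ` is an abstract partial symplectic quasi-state, vanishing on functions
supported in one of the sets `W j` and satisfying the Poisson bracket inequality
with constant `Q`; `ν` is any bound on the magnitude of Poisson non-commutativity
of the partition of unity `f`.  Then `ν ≥ 1/(2N²Q)`, hence `pb(W) ≥ 1/(2N²Q)`. -/
theorem stmt_10 {M : Type*}
    (P : (M → ℝ) → (M → ℝ) → (M → ℝ))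
    (ζ : (M → ℝ) → ℝ)
    {N : ℕ} (hN : 0 < N) (W : Fin N → Set M) (hcover : (⋃ j, W j) = Set.univ)
    (Q : ℝ) (hQ : 0 < Q)
    (hζhom : ∀ (s : ℝ) (F : M → ℝ), 0 < s → ζ (s • F) = s * ζ F)
    (hζone : ζ (fun _ => 1) = 1)
    (hζvanish : ∀ F : M → ℝ, (∃ j, Function.support F ⊆ W j) → ζ F = 0)
    (hζpb : ∀ (F G : M → ℝ) (b : ℝ), 0 ≤ b →
      (∃ j, Function.support G ⊆ W j) → (∀ z, |P F G z| ≤ b) →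
      |ζ (F + G) - ζ F - ζ G| ≤ Real.sqrt (2 * Q * b))
    (f : Fin N → M → ℝ)
    (hf0 : ∀ j z, 0 ≤ f j z) (hfsum : ∀ z, ∑ j, f j z = 1)
    (hfsupp : ∀ j, Function.support (f j) ⊆ W j)
    (ν : ℝ) (hν0 : 0 ≤ ν)
    (hν : ∀ x y : Fin N → ℝ, (∀ i, |x i| ≤ 1) → (∀ i, |y i| ≤ 1) →
      ∀ z, |P (fun w => ∑ i, x i * f i w) (fun w => ∑ i, y i * f i w) z| ≤ ν) :
    1 / (2 * (N : ℝ)^2 * Q) ≤ ν :=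
  stmt_10_general P ζ hN W Q hQ hζone hζvanish hζpb f hfsum hfsupp ν hν0 hν
end

section
/- Let f = {f_1,...,f_L} be a smooth partition of unity subordinated to an open cover U = {U_1,...,U_L} of a symplectic manifold M, and I ⊆ {1,...,L} with I and I^c nonempty. Set φ = Σ_{α∈I} f_α. Then φ : M → [0,1], φ = 0 on a neighborhood of U(I) = (∪_{α∈I} U_α)^c, and φ = 1 on a neighborhood of U(I^c); moreover for any other partition of unity g subordinated to a cover V and J ⊆ {1,...,N} with ψ = Σ_{α∈J} g_α, one has ν_c(f,g) ≥ 4‖{φ,ψ}‖, hence pb(U,V) ≥ 4·pb₄(U(I), U(I^c), V(J), V(J^c)). -/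
open scoped BigOperators

/-- The sup norm of a real-valued function. -/
noncomputable def supNorm {M : Type*} (h : M → ℝ) : ℝ :=
  sSup (Set.range fun z => |h z|)

/-- A partition of unity subordinated to a finite open cover. -/
def IsSubordinatedPU {M : Type*} [TopologicalSpace M] {L : ℕ}
    (U : Fin L → Set M) (f : Fin L → M → ℝ) : Prop :=
  (∀ i, Continuous (f i)) ∧ (∀ i z, 0 ≤ f i z) ∧ (∀ z, ∑ i, f i z = 1) ∧
  (∀ i, tsupport (f i) ⊆ U i)

/-- Magnitude of Poisson non-commutativity of a single partition of unity. -/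
noncomputable def nuC {M : Type*} (P : (M → ℝ) → (M → ℝ) → (M → ℝ)) {L : ℕ}
    (f : Fin L → M → ℝ) : ℝ :=
  sSup {r : ℝ | ∃ x y : Fin L → ℝ, (∀ i, |x i| ≤ 1) ∧ (∀ i, |y i| ≤ 1) ∧
    r = supNorm (P (fun w => ∑ i, x i * f i w) (fun w => ∑ i, y i * f i w))}

/-- Magnitude of mutual Poisson non-commutativity of two partitions of unity. -/
noncomputable def nuC2 {M : Type*} (P : (M → ℝ) → (M → ℝ) → (M → ℝ)) {L N : ℕ}
    (f : Fin L → M → ℝ) (g : Fin N → M → ℝ) : ℝ :=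
  sSup {r : ℝ | ∃ (x : Fin L → ℝ) (y : Fin N → ℝ),
    (∀ i, |x i| ≤ 1) ∧ (∀ j, |y j| ≤ 1) ∧
    r = supNorm (P (fun w => ∑ i, x i * f i w) (fun w => ∑ j, y j * g j w))}

/-- The Poisson bracket invariant of a pair of finite open covers. -/
noncomputable def pb2 {M : Type*} [TopologicalSpace M]
    (P : (M → ℝ) → (M → ℝ) → (M → ℝ)) {L N : ℕ}
    (U : Fin L → Set M) (V : Fin N → Set M) : ℝ :=
  sInf {r : ℝ | ∃ (f : Fin L → M → ℝ) (g : Fin N → M → ℝ),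
    IsSubordinatedPU U f ∧ IsSubordinatedPU V g ∧
    r = max (max (nuC P f) (nuC P g)) (nuC2 P f g)}

/-- The `pb₄` invariant of a quadruple of subsets. -/
noncomputable def pb4 {M : Type*} [TopologicalSpace M]
    (P : (M → ℝ) → (M → ℝ) → (M → ℝ)) (X₀ X₁ Y₀ Y₁ : Set M) : ℝ :=
  sInf {r : ℝ | ∃ φ ψ : M → ℝ,
    (∀ z, 0 ≤ φ z ∧ φ z ≤ 1) ∧ (∀ z, 0 ≤ ψ z ∧ ψ z ≤ 1) ∧
    (∃ X : Set M, IsOpen X ∧ X₀ ⊆ X ∧ ∀ x ∈ X, φ x = 0) ∧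
    (∃ X : Set M, IsOpen X ∧ X₁ ⊆ X ∧ ∀ x ∈ X, φ x = 1) ∧
    (∃ Y : Set M, IsOpen Y ∧ Y₀ ⊆ Y ∧ ∀ x ∈ Y, ψ x = 0) ∧
    (∃ Y : Set M, IsOpen Y ∧ Y₁ ⊆ Y ∧ ∀ x ∈ Y, ψ x = 1) ∧
    r = supNorm (P φ ψ)}


/-!
With the coefficients `x_α = 1` for `α ∈ I` and `x_α = -1` otherwise, the combination
`Σ x_α f_α` equals `2φ - 1` because the `f_α` sum to one; likewise `Σ y_β g_β = 2ψ - 1` for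
`J`. The bracket is bilinear and kills constants, so `{2φ - 1, 2ψ - 1} = 4{φ, ψ}`, one of the
values whose supremum is `ν_c(f, g)`. The supports of the `f_α`, `α ∈ I`, are closed and avoid
`U(I)`, which gives the neighbourhoods on which `φ` is `0` or `1`; hence `φ, ψ` compete in
`pb₄`, and taking infima over `(f, g)` gives `pb(U, V) ≥ 4 pb₄`.
-/

lemma supNorm_nonneg {M : Type*} (h : M → ℝ) : 0 ≤ supNorm h :=
  Real.iSup_nonneg fun _ => abs_nonneg _

lemma supNorm_smul_of_nonneg {M : Type*} {c : ℝ} (hc : 0 ≤ c) (h : M → ℝ) :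
    supNorm (c • h) = c * supNorm h := by
  change ⨆ z, |c * h z| = c * ⨆ z, |h z|
  simp_rw [Real.mul_iSup_of_nonneg hc, abs_mul, abs_of_nonneg hc]

lemma abs_sign_le {p : Prop} [Decidable p] : |(if p then 1 else -1 : ℝ)| ≤ 1 := by
  split_ifs <;> norm_num

lemma sum_sign_mul_eq {ι M : Type*} [Fintype ι] [DecidableEq ι] {f : ι → M → ℝ}
    (hf : ∀ z, ∑ i, f i z = 1) (I : Finset ι) :
    (fun w => ∑ i, (if i ∈ I then 1 else -1) * f i w)
      = (2 : ℝ) • (fun w => ∑ i ∈ I, f i w) + fun _ => -1 := by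
  funext w
  calc ∑ i, (if i ∈ I then 1 else -1) * f i w
        = ∑ i, (2 * (if i ∈ I then f i w else 0) - f i w) :=
          Finset.sum_congr rfl fun i _ => by split_ifs <;> ring
    _ = 2 * ∑ i ∈ I, f i w - 1 := by
          rw [Finset.sum_sub_distrib, ← Finset.mul_sum, Finset.sum_ite_mem, Finset.univ_inter, hf]
    _ = _ := by simp only [Pi.add_apply, Pi.smul_apply, smul_eq_mul]; ring

/- The coefficient vectors whose combination is bounded form a finite-dimensional space `W`,
mapped linearly, hence boundedly, into `ℓ^∞(M)`; off `W` the sup norm is the junk value `0`. -/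
open scoped ENNReal in
lemma exists_supNorm_sum_mul_le {K M : Type*} [Fintype K] (B : K → M → ℝ) :
    ∃ C, ∀ c : K → ℝ, (∀ k, |c k| ≤ 1) → supNorm (fun z => ∑ k, c k * B k z) ≤ C := by
  let Φ : (K → ℝ) →ₗ[ℝ] (M → ℝ) := Fintype.linearCombination ℝ B
  have hΦ : ∀ c, Φ c = fun z => ∑ k, c k * B k z := fun c => by
    ext z; simp [Φ, Fintype.linearCombination_apply]
  let W := (lpSubmodule ℝ (fun _ : M => ℝ) ∞).comap Φ
  let T : W →L[ℝ] lp (fun _ : M => ℝ) ∞ :=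
    LinearMap.toContinuousLinearMap
      (Φ.restrict (q := lpSubmodule ℝ (fun _ : M => ℝ) ∞) fun _ h => h)
  refine ⟨‖T‖, fun c hc => ?_⟩
  rw [← hΦ]
  by_cases hcW : c ∈ W
  · have hc1 : ‖(⟨c, hcW⟩ : W)‖ ≤ 1 := (pi_norm_le_iff_of_nonneg zero_le_one).mpr hc
    calc supNorm (Φ c) = ‖T ⟨c, hcW⟩‖ := rfl
      _ ≤ ‖T‖ * 1 := T.le_opNorm_of_le hc1
      _ = ‖T‖ := mul_one _
  · have : ¬ BddAbove (Set.range fun z => |Φ c z|) := fun h => hcW (memℓp_infty_iff.mpr h)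
    rw [supNorm, Real.sSup_of_not_bddAbove this]
    exact norm_nonneg T

namespace IsSubordinatedPU

variable {M : Type*} [TopologicalSpace M] {L : ℕ} {U : Fin L → Set M} {f : Fin L → M → ℝ}

lemma sum_mem_Icc (hf : IsSubordinatedPU U f) (I : Finset (Fin L)) (z : M) :
    0 ≤ ∑ α ∈ I, f α z ∧ ∑ α ∈ I, f α z ≤ 1 :=
  ⟨Finset.sum_nonneg fun α _ => hf.2.1 α z,
    (Finset.sum_le_univ_sum_of_nonneg fun α => hf.2.1 α z).trans (hf.2.2.1 z).le⟩

lemma exists_isOpen_sum_eq_zero (hf : IsSubordinatedPU U f) (I : Finset (Fin L)) :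
    ∃ X : Set M, IsOpen X ∧ (⋃ α ∈ I, U α)ᶜ ⊆ X ∧ ∀ x ∈ X, ∑ α ∈ I, f α x = 0 := by
  refine ⟨(⋃ α ∈ I, tsupport (f α))ᶜ, ?_, ?_, fun x hx => Finset.sum_eq_zero fun α hα => ?_⟩
  · exact (I.finite_toSet.isClosed_biUnion fun α _ => isClosed_tsupport (f α)).isOpen_compl
  · exact Set.compl_subset_compl.mpr (Set.iUnion₂_mono fun α _ => hf.2.2.2 α)
  · exact image_eq_zero_of_notMem_tsupport fun h => hx (Set.mem_biUnion hα h)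

lemma exists_isOpen_sum_eq_one (hf : IsSubordinatedPU U f) (I : Finset (Fin L)) :
    ∃ X : Set M, IsOpen X ∧ (⋃ β ∈ Iᶜ, U β)ᶜ ⊆ X ∧ ∀ x ∈ X, ∑ α ∈ I, f α x = 1 := by
  obtain ⟨X, hXopen, hUX, hX⟩ := hf.exists_isOpen_sum_eq_zero Iᶜ
  refine ⟨X, hXopen, hUX, fun x hx => ?_⟩
  rw [← hf.2.2.1 x, ← Finset.sum_add_sum_compl I, hX x hx, add_zero]

end IsSubordinatedPU

lemma pb4_le_supNorm {M : Type*} [TopologicalSpace M] (P : (M → ℝ) → (M → ℝ) → (M → ℝ))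
    {L N : ℕ} {U : Fin L → Set M} {V : Fin N → Set M} {f : Fin L → M → ℝ}
    {g : Fin N → M → ℝ} (hf : IsSubordinatedPU U f) (hg : IsSubordinatedPU V g)
    (I : Finset (Fin L)) (J : Finset (Fin N)) :
    pb4 P ((⋃ α ∈ I, U α)ᶜ) ((⋃ β ∈ Iᶜ, U β)ᶜ) ((⋃ α ∈ J, V α)ᶜ) ((⋃ β ∈ Jᶜ, V β)ᶜ)
      ≤ supNorm (P (fun z => ∑ α ∈ I, f α z) (fun z => ∑ α ∈ J, g α z)) := by
  refine csInf_le ⟨0, ?_⟩ ⟨_, _, hf.sum_mem_Icc I, hg.sum_mem_Icc J,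
    hf.exists_isOpen_sum_eq_zero I, hf.exists_isOpen_sum_eq_one I,
    hg.exists_isOpen_sum_eq_zero J, hg.exists_isOpen_sum_eq_one J, rfl⟩
  rintro r ⟨φ, ψ, -, -, -, -, -, -, rfl⟩
  exact supNorm_nonneg _

section Bracket

variable {M : Type*} (P : (M → ℝ) → (M → ℝ) → (M → ℝ))
  (hPaddL : ∀ F G H : M → ℝ, P (F + G) H = P F H + P G H)
  (hPaddR : ∀ F G H : M → ℝ, P F (G + H) = P F G + P F H)
  (hPsmulL : ∀ (c : ℝ) (F G : M → ℝ), P (c • F) G = c • P F G)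
  (hPsmulR : ∀ (c : ℝ) (F G : M → ℝ), P F (c • G) = c • P F G)
include hPaddL hPaddR hPsmulL hPsmulR

lemma bracket_sum_mul_sum_mul {L N : ℕ} (f : Fin L → M → ℝ) (g : Fin N → M → ℝ)
    (x : Fin L → ℝ) (y : Fin N → ℝ) :
    P (fun w => ∑ i, x i * f i w) (fun w => ∑ j, y j * g j w)
      = fun z => ∑ k : Fin L × Fin N, x k.1 * y k.2 * P (f k.1) (g k.2) z := by
  let B := LinearMap.mk₂ ℝ P hPaddL hPsmulL hPaddR hPsmulR
  have hx : (fun w => ∑ i, x i * f i w) = ∑ i, x i • f i := by ext; simp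
  have hy : (fun w => ∑ j, y j * g j w) = ∑ j, y j • g j := by ext; simp
  have hB : P (∑ i, x i • f i) (∑ j, y j • g j) = B (∑ i, x i • f i) (∑ j, y j • g j) := rfl
  ext z
  simp only [hx, hy, hB, B, map_sum, map_smul, LinearMap.coe_sum, LinearMap.coe_smul,
    Finset.sum_apply, Pi.smul_apply, LinearMap.mk₂_apply, smul_eq_mul, Finset.mul_sum,
    Fintype.sum_prod_type]
  rw [Finset.sum_comm]
  exact Finset.sum_congr rfl fun i _ => Finset.sum_congr rfl fun j _ => by ring

lemma bddAbove_nuC2_set {L N : ℕ} (f : Fin L → M → ℝ) (g : Fin N → M → ℝ) :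
    BddAbove {r : ℝ | ∃ (x : Fin L → ℝ) (y : Fin N → ℝ),
      (∀ i, |x i| ≤ 1) ∧ (∀ j, |y j| ≤ 1) ∧
      r = supNorm (P (fun w => ∑ i, x i * f i w) (fun w => ∑ j, y j * g j w))} := by
  obtain ⟨C, hC⟩ := exists_supNorm_sum_mul_le fun k : Fin L × Fin N => P (f k.1) (g k.2)
  refine ⟨C, ?_⟩
  rintro r ⟨x, y, hx, hy, rfl⟩
  rw [bracket_sum_mul_sum_mul P hPaddL hPaddR hPsmulL hPsmulR]
  refine hC _ fun k => ?_
  rw [abs_mul]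
  exact mul_le_one₀ (hx k.1) (abs_nonneg _) (hy k.2)

lemma supNorm_le_nuC2 {L N : ℕ} (f : Fin L → M → ℝ) (g : Fin N → M → ℝ)
    {x : Fin L → ℝ} {y : Fin N → ℝ} (hx : ∀ i, |x i| ≤ 1) (hy : ∀ j, |y j| ≤ 1) :
    supNorm (P (fun w => ∑ i, x i * f i w) (fun w => ∑ j, y j * g j w)) ≤ nuC2 P f g :=
  le_csSup (bddAbove_nuC2_set P hPaddL hPaddR hPsmulL hPsmulR f g) ⟨x, y, hx, hy, rfl⟩

lemma four_mul_supNorm_le_nuC2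
    (hPconstL : ∀ (c : ℝ) (G : M → ℝ), P (fun _ => c) G = 0)
    (hPconstR : ∀ (c : ℝ) (F : M → ℝ), P F (fun _ => c) = 0)
    {L N : ℕ} {f : Fin L → M → ℝ} {g : Fin N → M → ℝ}
    (hf : ∀ z, ∑ i, f i z = 1) (hg : ∀ z, ∑ j, g j z = 1) (I : Finset (Fin L))
    (J : Finset (Fin N)) :
    4 * supNorm (P (fun z => ∑ α ∈ I, f α z) (fun z => ∑ α ∈ J, g α z)) ≤ nuC2 P f g := by
  classical
  set φ := fun z => ∑ α ∈ I, f α z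
  set ψ := fun z => ∑ α ∈ J, g α z
  have hbracket :
      P ((2 : ℝ) • φ + fun _ => -1) ((2 : ℝ) • ψ + fun _ => -1) = (4 : ℝ) • P φ ψ := by
    rw [hPaddL, hPconstL, add_zero, hPaddR, hPconstR, add_zero, hPsmulL, hPsmulR, smul_smul]
    norm_num
  calc 4 * supNorm (P φ ψ) = supNorm ((4 : ℝ) • P φ ψ) :=
        (supNorm_smul_of_nonneg (by norm_num) _).symm
    _ = supNorm (P (fun w => ∑ i, (if i ∈ I then 1 else -1) * f i w)
          (fun w => ∑ j, (if j ∈ J then 1 else -1) * g j w)) := by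
        rw [sum_sign_mul_eq hf, sum_sign_mul_eq hg, hbracket]
    _ ≤ nuC2 P f g :=
        supNorm_le_nuC2 P hPaddL hPaddR hPsmulL hPsmulR f g (fun _ => abs_sign_le)
          fun _ => abs_sign_le

lemma four_mul_pb4_le_pb2 [TopologicalSpace M]
    (hPconstL : ∀ (c : ℝ) (G : M → ℝ), P (fun _ => c) G = 0)
    (hPconstR : ∀ (c : ℝ) (F : M → ℝ), P F (fun _ => c) = 0)
    {L N : ℕ} {U : Fin L → Set M} {V : Fin N → Set M} {f : Fin L → M → ℝ}
    {g : Fin N → M → ℝ} (hf : IsSubordinatedPU U f) (hg : IsSubordinatedPU V g)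
    (I : Finset (Fin L)) (J : Finset (Fin N)) :
    4 * pb4 P ((⋃ α ∈ I, U α)ᶜ) ((⋃ β ∈ Iᶜ, U β)ᶜ) ((⋃ α ∈ J, V α)ᶜ) ((⋃ β ∈ Jᶜ, V β)ᶜ)
      ≤ pb2 P U V := by
  refine le_csInf ⟨_, f, g, hf, hg, rfl⟩ ?_
  rintro r ⟨f', g', hf', hg', rfl⟩
  calc 4 * pb4 P ((⋃ α ∈ I, U α)ᶜ) ((⋃ β ∈ Iᶜ, U β)ᶜ) ((⋃ α ∈ J, V α)ᶜ) ((⋃ β ∈ Jᶜ, V β)ᶜ)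
      ≤ 4 * supNorm (P (fun z => ∑ α ∈ I, f' α z) (fun z => ∑ α ∈ J, g' α z)) := by
        gcongr
        exact pb4_le_supNorm P hf' hg' I J
    _ ≤ nuC2 P f' g' := four_mul_supNorm_le_nuC2 P hPaddL hPaddR hPsmulL hPsmulR hPconstL
        hPconstR hf'.2.2.1 hg'.2.2.1 I J
    _ ≤ _ := le_max_right _ _

end Bracket

theorem stmt_19_general {M : Type*} [TopologicalSpace M]
    (P : (M → ℝ) → (M → ℝ) → (M → ℝ))
    (hPaddL : ∀ F G H : M → ℝ, P (F + G) H = P F H + P G H)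
    (hPaddR : ∀ F G H : M → ℝ, P F (G + H) = P F G + P F H)
    (hPsmulL : ∀ (c : ℝ) (F G : M → ℝ), P (c • F) G = c • P F G)
    (hPsmulR : ∀ (c : ℝ) (F G : M → ℝ), P F (c • G) = c • P F G)
    (hPconstL : ∀ (c : ℝ) (G : M → ℝ), P (fun _ => c) G = 0)
    (hPconstR : ∀ (c : ℝ) (F : M → ℝ), P F (fun _ => c) = 0)
    {L N : ℕ} (U : Fin L → Set M) (V : Fin N → Set M)
    (f : Fin L → M → ℝ) (g : Fin N → M → ℝ)
    (hf : IsSubordinatedPU U f) (hg : IsSubordinatedPU V g)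
    (I : Finset (Fin L))
    (J : Finset (Fin N))
    (φ ψ : M → ℝ)
    (hφ : φ = fun z => ∑ α ∈ I, f α z)
    (hψ : ψ = fun z => ∑ α ∈ J, g α z) :
    (∀ z, 0 ≤ φ z ∧ φ z ≤ 1) ∧
    (∃ X : Set M, IsOpen X ∧ (⋃ α ∈ I, U α)ᶜ ⊆ X ∧ ∀ x ∈ X, φ x = 0) ∧
    (∃ X : Set M, IsOpen X ∧ (⋃ β ∈ Iᶜ, U β)ᶜ ⊆ X ∧ ∀ x ∈ X, φ x = 1) ∧
    4 * supNorm (P φ ψ) ≤ nuC2 P f g ∧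
    4 * pb4 P ((⋃ α ∈ I, U α)ᶜ) ((⋃ β ∈ Iᶜ, U β)ᶜ)
              ((⋃ α ∈ J, V α)ᶜ) ((⋃ β ∈ Jᶜ, V β)ᶜ) ≤ pb2 P U V := by
  subst hφ hψ
  exact ⟨hf.sum_mem_Icc I, hf.exists_isOpen_sum_eq_zero I, hf.exists_isOpen_sum_eq_one I,
    four_mul_supNorm_le_nuC2 P hPaddL hPaddR hPsmulL hPsmulR hPconstL hPconstR hf.2.2.1 hg.2.2.1
      I J,
    four_mul_pb4_le_pb2 P hPaddL hPaddR hPsmulL hPsmulR hPconstL hPconstR hf hg I J⟩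

/-- Overlap-layer lower bound: for partitions of unity `f, g` subordinated to
covers `U, V` and index sets `I, J`, the function `φ = ∑_{α ∈ I} f_α` takes
values in `[0,1]`, vanishes near `U(I)`, equals `1` near `U(Iᶜ)`, and
`ν_c(f,g) ≥ 4‖{φ,ψ}‖`; hence `pb(U,V) ≥ 4·pb₄(U(I), U(Iᶜ), V(J), V(Jᶜ))`. -/
theorem stmt_19 {M : Type*} [TopologicalSpace M]
    (P : (M → ℝ) → (M → ℝ) → (M → ℝ))
    (hPaddL : ∀ F G H : M → ℝ, P (F + G) H = P F H + P G H)
    (hPaddR : ∀ F G H : M → ℝ, P F (G + H) = P F G + P F H)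
    (hPsmulL : ∀ (c : ℝ) (F G : M → ℝ), P (c • F) G = c • P F G)
    (hPsmulR : ∀ (c : ℝ) (F G : M → ℝ), P F (c • G) = c • P F G)
    (hPconstL : ∀ (c : ℝ) (G : M → ℝ), P (fun _ => c) G = 0)
    (hPconstR : ∀ (c : ℝ) (F : M → ℝ), P F (fun _ => c) = 0)
    {L N : ℕ} (U : Fin L → Set M) (V : Fin N → Set M)
    (hUopen : ∀ i, IsOpen (U i)) (hVopen : ∀ j, IsOpen (V j))
    (hUcover : (⋃ i, U i) = Set.univ) (hVcover : (⋃ j, V j) = Set.univ)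
    (f : Fin L → M → ℝ) (g : Fin N → M → ℝ)
    (hf : IsSubordinatedPU U f) (hg : IsSubordinatedPU V g)
    (I : Finset (Fin L)) (hI : I.Nonempty) (hIc : Iᶜ.Nonempty)
    (J : Finset (Fin N)) (hJ : J.Nonempty) (hJc : Jᶜ.Nonempty)
    (φ ψ : M → ℝ)
    (hφ : φ = fun z => ∑ α ∈ I, f α z)
    (hψ : ψ = fun z => ∑ α ∈ J, g α z) :
    (∀ z, 0 ≤ φ z ∧ φ z ≤ 1) ∧
    (∃ X : Set M, IsOpen X ∧ (⋃ α ∈ I, U α)ᶜ ⊆ X ∧ ∀ x ∈ X, φ x = 0) ∧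
    (∃ X : Set M, IsOpen X ∧ (⋃ β ∈ Iᶜ, U β)ᶜ ⊆ X ∧ ∀ x ∈ X, φ x = 1) ∧
    4 * supNorm (P φ ψ) ≤ nuC2 P f g ∧
    4 * pb4 P ((⋃ α ∈ I, U α)ᶜ) ((⋃ β ∈ Iᶜ, U β)ᶜ)
              ((⋃ α ∈ J, V α)ᶜ) ((⋃ β ∈ Jᶜ, V β)ᶜ) ≤ pb2 P U V :=
  stmt_19_general P hPaddL hPaddR hPsmulL hPsmulR hPconstL hPconstR U V f g hf hg I J φ ψ hφ hψ
end
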